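/- arXiv:1202.2460 — 2 statements merged into one kernel-verified Lean document; each statement's English description precedes it below -/
import Mathlib

section
/- Let X be a finite set with |X| = n ≥ 2. Every hierarchy H on X satisfies |H| ≤ 2n − 1; moreover, the following three assertions about a hierarchy H on X are equivalent: (a) |H| = 2n − 1; (b) H is a maximal hierarchy on X, i.e., no hierarchy on X properly contains H; (c) H = H*. -/
/-- Two subsets `A`, `B` are compatible if `A ∩ B ∈ {∅, A, B}`. -/
def Compatible {α : Type*} [DecidableEq α] (A B : Finset α) : Prop :=
  A ∩ B = ∅ ∨ A ∩ B = A ∨ A ∩ B = B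

instance {α : Type*} [DecidableEq α] (A B : Finset α) : Decidable (Compatible A B) := by
  unfold Compatible; infer_instance

/-- A cluster system: a collection of non-empty subsets of `X`. -/
def IsCSF {α : Type*} [DecidableEq α] (C : Finset (Finset α)) : Prop :=
  ∀ A ∈ C, A.Nonempty

/-- A hierarchy: a cluster system whose members are pairwise compatible. -/
def IsHierarchyF {α : Type*} [DecidableEq α] (C : Finset (Finset α)) : Prop :=
  IsCSF C ∧ ∀ A ∈ C, ∀ B ∈ C, Compatible A B

/-- A maximal hierarchy: a hierarchy not properly contained in any other hierarchy. -/
def IsMaxHierarchyF {α : Type*} [DecidableEq α] (H : Finset (Finset α)) : Prop :=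
  IsHierarchyF H ∧ ∀ D : Finset (Finset α), IsHierarchyF D → H ⊆ D → D = H

/-- The adjoint `C*`: all non-empty subsets of `X` compatible with every member of `C`. -/
def adjF {α : Type*} [Fintype α] [DecidableEq α] (C : Finset (Finset α)) : Finset (Finset α) :=
  Finset.univ.filter (fun A => A.Nonempty ∧ ∀ B ∈ C, Compatible A B)

/-!
A maximal hierarchy `H` on a set `S` with `|S| ≥ 2` contains `S`; if `M` is a maximal member
of `H \ {S}`, then `S \ M` is compatible with every member of `H`, hence lies in `H`, and every
other member of `H` lies inside `M` or inside `S \ M`. The members below a cluster `T` of a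
maximal hierarchy form a maximal hierarchy on `T`, so induction gives
`|H| = 1 + (2|M| - 1) + (2|S \ M| - 1) = 2|S| - 1`. The bound for an arbitrary hierarchy
follows by extending it to a maximal one.
-/

section Hierarchy

open Finset

variable {α : Type*} [DecidableEq α]

theorem compatible_iff {A B : Finset α} :
    Compatible A B ↔ Disjoint A B ∨ A ⊆ B ∨ B ⊆ A := by
  simp only [Compatible, disjoint_iff_inter_eq_empty, inter_eq_left, inter_eq_right]

theorem Compatible.symm {A B : Finset α} (h : Compatible A B) : Compatible B A := by
  rw [compatible_iff] at h ⊢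
  rcases h with h | h | h
  exacts [Or.inl h.symm, Or.inr (Or.inr h), Or.inr (Or.inl h)]

theorem compatible_self (A : Finset α) : Compatible A A :=
  compatible_iff.2 (Or.inr (Or.inl subset_rfl))

theorem compatible_singleton (x : α) (B : Finset α) : Compatible {x} B := by
  rw [compatible_iff]
  by_cases hx : x ∈ B
  · exact Or.inr (Or.inl (singleton_subset_iff.2 hx))
  · exact Or.inl (disjoint_singleton_left.2 hx)

theorem Compatible.of_subset {A T B : Finset α} (hAT : A ⊆ T) (hTB : Compatible T B)
    (hBT : B ⊆ T → Compatible A B) : Compatible A B := by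
  rcases compatible_iff.1 hTB with h | h | h
  · exact compatible_iff.2 (Or.inl (h.mono_left hAT))
  · exact compatible_iff.2 (Or.inr (Or.inl (hAT.trans h)))
  · exact hBT h

theorem IsHierarchyF.mono {H D : Finset (Finset α)} (hH : IsHierarchyF H) (hD : D ⊆ H) :
    IsHierarchyF D :=
  ⟨fun A hA => hH.1 A (hD hA), fun A hA B hB => hH.2 A (hD hA) B (hD hB)⟩

theorem IsHierarchyF.insert {H : Finset (Finset α)} (hH : IsHierarchyF H) {A : Finset α}
    (hA : A.Nonempty) (hcomp : ∀ B ∈ H, Compatible A B) : IsHierarchyF (insert A H) := by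
  refine ⟨fun B hB => ?_, fun B hB C hC => ?_⟩
  · rcases mem_insert.1 hB with rfl | hB
    exacts [hA, hH.1 B hB]
  · rcases mem_insert.1 hB with rfl | hB' <;> rcases mem_insert.1 hC with rfl | hC'
    exacts [compatible_self _, hcomp C hC', (hcomp B hB').symm, hH.2 B hB' C hC']

def IsMaxHierarchyOn (S : Finset α) (H : Finset (Finset α)) : Prop :=
  IsHierarchyF H ∧ (∀ A ∈ H, A ⊆ S) ∧
    ∀ A : Finset α, A.Nonempty → A ⊆ S → (∀ B ∈ H, Compatible A B) → A ∈ H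

namespace IsMaxHierarchyOn

variable {S : Finset α} {H : Finset (Finset α)}

theorem self_mem (h : IsMaxHierarchyOn S H) (hS : S.Nonempty) : S ∈ H :=
  h.2.2 S hS subset_rfl fun B hB => compatible_iff.2 (Or.inr (Or.inr (h.2.1 B hB)))

theorem singleton_mem (h : IsMaxHierarchyOn S H) {x : α} (hx : x ∈ S) : {x} ∈ H :=
  h.2.2 {x} (singleton_nonempty x) (singleton_subset_iff.2 hx) fun B _ =>
    compatible_singleton x B

theorem restrict (h : IsMaxHierarchyOn S H) {T : Finset α} (hTS : T ⊆ S)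
    (hT : ∀ B ∈ H, Compatible T B) : IsMaxHierarchyOn T (H.filter (· ⊆ T)) := by
  refine ⟨h.1.mono (filter_subset _ _), fun A hA => (mem_filter.1 hA).2,
    fun A hA hAT hcomp => mem_filter.2 ⟨h.2.2 A hA (hAT.trans hTS) fun B hB => ?_, hAT⟩⟩
  exact Compatible.of_subset hAT (hT B hB) fun hBT => hcomp B (mem_filter.2 ⟨hB, hBT⟩)

variable {M : Finset α}

theorem subset_or_disjoint_of_maximal (h : IsMaxHierarchyOn S H)
    (hM : Maximal (· ∈ H.erase S) M) {B : Finset α} (hB : B ∈ H.erase S) :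
    B ⊆ M ∨ Disjoint B M := by
  rcases compatible_iff.1 (h.1.2 B (mem_of_mem_erase hB) M (mem_of_mem_erase hM.1))
    with hd | hBM | hMB
  exacts [Or.inr hd, Or.inl hBM, Or.inl (hM.2 hB hMB)]

theorem compatible_sdiff_of_maximal (h : IsMaxHierarchyOn S H)
    (hM : Maximal (· ∈ H.erase S) M) (B : Finset α) (hB : B ∈ H) : Compatible (S \ M) B := by
  rw [compatible_iff]
  by_cases hBS : B = S
  · exact Or.inr (Or.inl (hBS ▸ sdiff_subset))
  · rcases h.subset_or_disjoint_of_maximal hM (mem_erase.2 ⟨hBS, hB⟩) with hBM | hd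
    · exact Or.inl (disjoint_sdiff_self_left.mono_right hBM)
    · exact Or.inr (Or.inr (subset_sdiff.2 ⟨h.2.1 B hB, hd⟩))

theorem erase_eq_filter_union_of_maximal (h : IsMaxHierarchyOn S H)
    (hM : Maximal (· ∈ H.erase S) M) :
    H.erase S = H.filter (· ⊆ M) ∪ H.filter (· ⊆ S \ M) := by
  have hMS : M ⊆ S := h.2.1 M (mem_of_mem_erase hM.1)
  ext B
  simp only [mem_erase, mem_union, mem_filter]
  constructor
  · rintro ⟨hBS, hB⟩
    rcases h.subset_or_disjoint_of_maximal hM (mem_erase.2 ⟨hBS, hB⟩) with hBM | hd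
    exacts [Or.inl ⟨hB, hBM⟩, Or.inr ⟨hB, subset_sdiff.2 ⟨h.2.1 B hB, hd⟩⟩]
  · rintro (⟨hB, hBM⟩ | ⟨hB, hBSM⟩) <;> refine ⟨?_, hB⟩ <;> rintro rfl
    · exact ne_of_mem_erase hM.1 (hMS.antisymm hBM)
    · have hd := (subset_sdiff.1 (hMS.trans hBSM)).2
      exact (h.1.1 M (mem_of_mem_erase hM.1)).ne_empty (disjoint_self.1 hd)

theorem disjoint_filter_of_maximal (h : IsMaxHierarchyOn S H) :
    Disjoint (H.filter (· ⊆ M)) (H.filter (· ⊆ S \ M)) := by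
  rw [disjoint_left]
  intro A hAM hASM
  obtain ⟨hA, hAM⟩ := mem_filter.1 hAM
  have hd := (subset_sdiff.1 (mem_filter.1 hASM).2).2
  exact (h.1.1 A hA).ne_empty (disjoint_self.1 (hd.mono_right hAM))

theorem card_eq (h : IsMaxHierarchyOn S H) : H.card = 2 * S.card - 1 := by
  induction S using Finset.strongInduction generalizing H with
  | _ S ih =>
  rcases S.eq_empty_or_nonempty with rfl | hS
  · have hH : H = ∅ := eq_empty_of_forall_notMem fun A hA =>
      (h.1.1 A hA).ne_empty (subset_empty.1 (h.2.1 A hA))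
    simp [hH]
  rw [← card_erase_add_one (h.self_mem hS)]
  rcases (H.erase S).eq_empty_or_nonempty with hempty | hne
  · obtain ⟨x, hx⟩ := hS
    have hxS : {x} = S := by
      by_contra hxS
      simpa [hempty] using mem_erase.2 ⟨hxS, h.singleton_mem hx⟩
    rw [hempty, ← hxS]
    rfl
  obtain ⟨M, hM⟩ := Finset.exists_maximal hne
  have hMH : M ∈ H := mem_of_mem_erase hM.1
  have hMS : M ⊆ S := h.2.1 M hMH
  have hMne : M.Nonempty := h.1.1 M hMH
  have hSMne : (S \ M).Nonempty :=
    sdiff_nonempty.2 fun hSM => ne_of_mem_erase hM.1 (hMS.antisymm hSM)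
  have hcardM := ih M (ssubset_of_subset_of_ne hMS (ne_of_mem_erase hM.1))
    (h.restrict hMS fun B hB => h.1.2 M hMH B hB)
  have hcardSM := ih (S \ M) (sdiff_ssubset hMS hMne)
    (h.restrict sdiff_subset (h.compatible_sdiff_of_maximal hM))
  have := hMne.card_pos
  have := hSMne.card_pos
  rw [h.erase_eq_filter_union_of_maximal hM, card_union_of_disjoint h.disjoint_filter_of_maximal,
    hcardM, hcardSM, ← card_sdiff_add_card_eq_card hMS]
  omega

end IsMaxHierarchyOn

section Fintype

variable [Fintype α] {H : Finset (Finset α)}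

theorem mem_adjF {C : Finset (Finset α)} {A : Finset α} :
    A ∈ adjF C ↔ A.Nonempty ∧ ∀ B ∈ C, Compatible A B := by
  simp [adjF]

theorem isMaxHierarchyF_iff_eq_adjF (hH : IsHierarchyF H) : IsMaxHierarchyF H ↔ H = adjF H := by
  have hHadj : H ⊆ adjF H := fun A hA => mem_adjF.2 ⟨hH.1 A hA, hH.2 A hA⟩
  refine ⟨fun hmax => hHadj.antisymm fun A hA => ?_, fun hadj => ⟨hH, fun D hD hHD => ?_⟩⟩
  · obtain ⟨hAne, hcomp⟩ := mem_adjF.1 hA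
    rw [← hmax.2 _ (hH.insert hAne hcomp) (subset_insert A H)]
    exact mem_insert_self A H
  · refine Subset.antisymm (fun A hA => ?_) hHD
    rw [hadj]
    exact mem_adjF.2 ⟨hD.1 A hA, fun B hB => hD.2 A hA B (hHD hB)⟩

theorem IsMaxHierarchyF.card_eq (h : IsMaxHierarchyF H) : H.card = 2 * Fintype.card α - 1 := by
  have hadj := (isMaxHierarchyF_iff_eq_adjF h.1).1 h
  have hon : IsMaxHierarchyOn univ H :=
    ⟨h.1, fun A _ => subset_univ A, fun A hA _ hcomp => hadj ▸ mem_adjF.2 ⟨hA, hcomp⟩⟩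
  rw [hon.card_eq, card_univ]

theorem IsHierarchyF.exists_isMaxHierarchyF_superset (hH : IsHierarchyF H) :
    ∃ D, H ⊆ D ∧ IsMaxHierarchyF D := by
  classical
  obtain ⟨D, hD, hDmax⟩ := exists_max_image (univ.filter fun D => IsHierarchyF D ∧ H ⊆ D) card
    ⟨H, mem_filter.2 ⟨mem_univ H, hH, subset_rfl⟩⟩
  obtain ⟨hDh, hHD⟩ := (mem_filter.1 hD).2
  refine ⟨D, hHD, hDh, fun E hE hDE => (eq_of_subset_of_card_le hDE ?_).symm⟩
  exact hDmax E (mem_filter.2 ⟨mem_univ E, hE, hHD.trans hDE⟩)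

theorem IsHierarchyF.card_le (hH : IsHierarchyF H) : H.card ≤ 2 * Fintype.card α - 1 := by
  obtain ⟨D, hHD, hD⟩ := hH.exists_isMaxHierarchyF_superset
  exact hD.card_eq ▸ card_le_card hHD

theorem IsHierarchyF.isMaxHierarchyF_of_card_eq (hH : IsHierarchyF H)
    (hcard : H.card = 2 * Fintype.card α - 1) : IsMaxHierarchyF H :=
  ⟨hH, fun _ hD hHD => (eq_of_subset_of_card_le hHD (hcard ▸ hD.card_le)).symm⟩

end Fintype

end Hierarchy

theorem stmt0_general {α : Type*} [Fintype α] [DecidableEq α] (n : ℕ)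
    (hcard : Fintype.card α = n) (H : Finset (Finset α)) (hH : IsHierarchyF H) :
    H.card ≤ 2 * n - 1 ∧
    (H.card = 2 * n - 1 ↔ IsMaxHierarchyF H) ∧
    (IsMaxHierarchyF H ↔ H = adjF H) := by
  subst hcard
  exact ⟨hH.card_le, ⟨hH.isMaxHierarchyF_of_card_eq, IsMaxHierarchyF.card_eq⟩,
    isMaxHierarchyF_iff_eq_adjF hH⟩

/-- Every hierarchy on an `n`-set (`n ≥ 2`) has at most `2n - 1` members, and for a
hierarchy `H`: `|H| = 2n - 1` ↔ `H` is a maximal hierarchy ↔ `H = H*`. -/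
theorem stmt0 {α : Type*} [Fintype α] [DecidableEq α] (n : ℕ) (hn : 2 ≤ n)
    (hcard : Fintype.card α = n) (H : Finset (Finset α)) (hH : IsHierarchyF H) :
    H.card ≤ 2 * n - 1 ∧
    (H.card = 2 * n - 1 ↔ IsMaxHierarchyF H) ∧
    (IsMaxHierarchyF H ↔ H = adjF H) :=
  stmt0_general n hcard H hH
end

section
/- Let X be a finite set, let C be a cluster system for X, and let p be an integer such that |⋃C'| ≥ |C'| + p holds for every non-empty subcollection C' ⊆ C. Then the collection D of all non-empty subcollections C' ⊆ C with |⋃C'| = |C'| + p is a patchwork on the ground set C; that is, whenever C', C'' ∈ D satisfy C' ∩ C'' ∉ {∅, C', C''}, both C' ∩ C'' and C' ∪ C'' belong to D. -/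
/-!
The surplus `C' ↦ |⋃C'| - |C'|` is submodular: the union of `C' ∪ C''` is the union of the two
unions, the union of `C' ∩ C''` lies in their intersection, and `|·|` is modular on both levels.
Since the surplus is at least `p` on the non-empty `C' ∩ C''` and `C' ∪ C''`, and equals `p` on
`C'` and `C''`, it must equal `p` on both.
-/

namespace Finset

variable {ι α : Type*} [DecidableEq ι] [DecidableEq α]

theorem card_sup_inter_add_card_sup_union_le (f : ι → Finset α) (A B : Finset ι) :
    ((A ∩ B).sup f).card + ((A ∪ B).sup f).card ≤ (A.sup f).card + (B.sup f).card := by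
  have hinter : (A ∩ B).sup f ⊆ A.sup f ∩ B.sup f :=
    subset_inter (sup_mono inter_subset_left) (sup_mono inter_subset_right)
  calc ((A ∩ B).sup f).card + ((A ∪ B).sup f).card
      ≤ (A.sup f ∩ B.sup f).card + (A.sup f ∪ B.sup f).card := by
        rw [sup_union, sup_eq_union]
        exact Nat.add_le_add_right (card_le_card hinter) _
    _ = (A.sup f).card + (B.sup f).card := card_inter_add_card_union _ _

theorem surplus_inter_add_surplus_union_le (f : ι → Finset α) (A B : Finset ι) :
    (((A ∩ B).sup f).card - (A ∩ B).card : ℤ) + (((A ∪ B).sup f).card - (A ∪ B).card)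
      ≤ ((A.sup f).card - A.card) + ((B.sup f).card - B.card) := by
  have hsup := card_sup_inter_add_card_sup_union_le f A B
  have hcard := card_inter_add_card_union A B
  omega

end Finset

theorem stmt4_general {α : Type*} [DecidableEq α]
    (C : Finset (Finset α)) (p : ℤ)
    (h : ∀ C' ⊆ C, C'.Nonempty → (C'.card : ℤ) + p ≤ ((C'.sup id).card : ℤ)) :
    ∀ C' ∈ {D : Finset (Finset α) | D ⊆ C ∧ D.Nonempty ∧
        ((D.sup id).card : ℤ) = (D.card : ℤ) + p},
    ∀ C'' ∈ {D : Finset (Finset α) | D ⊆ C ∧ D.Nonempty ∧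
        ((D.sup id).card : ℤ) = (D.card : ℤ) + p},
      ¬(C' ∩ C'' = ∅ ∨ C' ∩ C'' = C' ∨ C' ∩ C'' = C'') →
      (C' ∩ C'' ∈ {D : Finset (Finset α) | D ⊆ C ∧ D.Nonempty ∧
          ((D.sup id).card : ℤ) = (D.card : ℤ) + p} ∧
       C' ∪ C'' ∈ {D : Finset (Finset α) | D ⊆ C ∧ D.Nonempty ∧
          ((D.sup id).card : ℤ) = (D.card : ℤ) + p}) := by
  rintro C' ⟨hC'C, hC'ne, hC'tight⟩ C'' ⟨hC''C, -, hC''tight⟩ hincomp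
  have hinter_ne : (C' ∩ C'').Nonempty := Finset.nonempty_iff_ne_empty.2 fun h0 ↦ hincomp (.inl h0)
  have hinter_sub : C' ∩ C'' ⊆ C := Finset.inter_subset_left.trans hC'C
  have hunion_sub : C' ∪ C'' ⊆ C := Finset.union_subset hC'C hC''C
  have hunion_ne : (C' ∪ C'').Nonempty := hC'ne.mono Finset.subset_union_left
  have hinter_ge := h _ hinter_sub hinter_ne
  have hunion_ge := h _ hunion_sub hunion_ne
  have hsubmod := Finset.surplus_inter_add_surplus_union_le id C' C''
  exact ⟨⟨hinter_sub, hinter_ne, by linarith⟩, ⟨hunion_sub, hunion_ne, by linarith⟩⟩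

/-- If `|⋃C'| ≥ |C'| + p` for every non-empty subcollection `C'` of a cluster system `C`,
then the collection of non-empty subcollections achieving equality is a patchwork on
the ground set `C`. -/
theorem stmt4 {α : Type*} [Fintype α] [DecidableEq α]
    (C : Finset (Finset α)) (hC : ∀ A ∈ C, A.Nonempty) (p : ℤ)
    (h : ∀ C' ⊆ C, C'.Nonempty → (C'.card : ℤ) + p ≤ ((C'.sup id).card : ℤ)) :
    ∀ C' ∈ {D : Finset (Finset α) | D ⊆ C ∧ D.Nonempty ∧
        ((D.sup id).card : ℤ) = (D.card : ℤ) + p},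
    ∀ C'' ∈ {D : Finset (Finset α) | D ⊆ C ∧ D.Nonempty ∧
        ((D.sup id).card : ℤ) = (D.card : ℤ) + p},
      ¬(C' ∩ C'' = ∅ ∨ C' ∩ C'' = C' ∨ C' ∩ C'' = C'') →
      (C' ∩ C'' ∈ {D : Finset (Finset α) | D ⊆ C ∧ D.Nonempty ∧
          ((D.sup id).card : ℤ) = (D.card : ℤ) + p} ∧
       C' ∪ C'' ∈ {D : Finset (Finset α) | D ⊆ C ∧ D.Nonempty ∧
          ((D.sup id).card : ℤ) = (D.card : ℤ) + p}) :=
  stmt4_general C p h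
end
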